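/- arXiv:1711.02314 — 4 statements merged into one kernel-verified Lean document; each statement's English description precedes it below -/
import Mathlib

section
/- Let N ≥ 1 and let h be an N×N complex matrix that is tridiagonal with zero diagonal, i.e. h_{nm} = 0 whenever |n−m| ≠ 1. Let D be the N×N diagonal matrix with diagonal entries D_{nn} = (−1)^n, and let Y = [[0,−i],[i,0]] and Z = [[1,0],[0,−1]] be the 2×2 Pauli matrices. Then for every real t, the matrix Z ⊗ D (Kronecker product) commutes with exp(−2it (Y ⊗ h)). -/
open Matrix Kronecker Complex

/-! `Z` anticommutes with `Y`, and `D` anticommutes with `h` because `h` only couples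
neighbouring sites, where the signs of `D` are opposite. Two anticommuting pairs give a
commuting pair of Kronecker products, and whatever commutes with `Y ⊗ h` commutes with
its exponential. -/

namespace Matrix

variable {l n α : Type*} [Fintype l] [Fintype n]

theorem commute_kronecker_of_mul_eq_neg [CommRing α] {A B : Matrix l l α} {C E : Matrix n n α}
    (hAB : A * B = -(B * A)) (hCE : C * E = -(E * C)) : Commute (A ⊗ₖ C) (B ⊗ₖ E) := by
  rw [Commute, SemiconjBy, ← mul_kronecker_mul, ← mul_kronecker_mul, hAB, hCE,
    ← neg_one_smul α (B * A), ← neg_one_smul α (E * C), smul_kronecker, kronecker_smul, smul_smul,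
    neg_one_mul, neg_neg, one_smul]

theorem diagonal_mul_eq_neg_mul_diagonal [DecidableEq n] [CommRing α] {d : n → α}
    {M : Matrix n n α} (hM : ∀ i j, M i j ≠ 0 → d i = -d j) :
    diagonal d * M = -(M * diagonal d) := by
  ext i j
  rw [diagonal_mul, neg_apply, mul_diagonal]
  by_cases hij : M i j = 0
  · simp [hij]
  · rw [hM i j hij, neg_mul, mul_comm]

end Matrix

theorem pauliZ_mul_pauliY :
    (!![1, 0; 0, -1] : Matrix (Fin 2) (Fin 2) ℂ) * !![0, -I; I, 0]
      = -(!![0, -I; I, 0] * !![1, 0; 0, -1]) := by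
  ext i j
  fin_cases i <;> fin_cases j <;> simp [Matrix.mul_apply, Fin.sum_univ_two]

theorem neg_one_pow_succ_eq_neg_of_natAbs_sub_eq_one {N : ℕ} {n m : Fin N}
    (hnm : ((n : ℤ) - (m : ℤ)).natAbs = 1) :
    (-1 : ℂ) ^ ((n : ℕ) + 1) = -(-1 : ℂ) ^ ((m : ℕ) + 1) := by
  rcases (by omega : (n : ℕ) = m + 1 ∨ (m : ℕ) = n + 1) with hn | hm
  · rw [hn, pow_succ _ ((m : ℕ) + 1), mul_neg_one]
  · rw [hm, pow_succ _ ((n : ℕ) + 1), mul_neg_one, neg_neg]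

theorem stmt0_general (N : ℕ) (h : Matrix (Fin N) (Fin N) ℂ)
    (htri : ∀ n m : Fin N, ((n : ℤ) - (m : ℤ)).natAbs ≠ 1 → h n m = 0)
    (D : Matrix (Fin N) (Fin N) ℂ)
    (hD : D = Matrix.diagonal fun n : Fin N => (-1 : ℂ) ^ ((n : ℕ) + 1))
    (Y Z : Matrix (Fin 2) (Fin 2) ℂ)
    (hY : Y = !![0, -Complex.I; Complex.I, 0])
    (hZ : Z = !![1, 0; 0, -1])
    (t : ℝ) :
    Commute (Z ⊗ₖ D)
      (NormedSpace.exp ((-2 * Complex.I * (t : ℂ)) • (Y ⊗ₖ h))) := by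
  have hDh : D * h = -(h * D) := by
    rw [hD]
    refine diagonal_mul_eq_neg_mul_diagonal fun n m hnm => ?_
    exact neg_one_pow_succ_eq_neg_of_natAbs_sub_eq_one (not_not.mp (mt (htri n m) hnm))
  have hZY : Z * Y = -(Y * Z) := by rw [hY, hZ, pauliZ_mul_pauliY]
  exact ((commute_kronecker_of_mul_eq_neg hZY hDh).smul_right _).exp_right

/-- For a tridiagonal `N × N` complex matrix `h` with zero diagonal
(`h n m = 0` whenever `|n - m| ≠ 1`), the matrix `Z ⊗ D` (with `D` the alternating-sign
diagonal matrix `D_{nn} = (-1)^n`, indices `1,…,N`, and `Z` the Pauli-Z matrix) commutes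
with `exp (-2 i t (Y ⊗ h))` for every real `t`, where `Y` is the Pauli-Y matrix. -/
theorem stmt0 (N : ℕ) (hN : 1 ≤ N) (h : Matrix (Fin N) (Fin N) ℂ)
    (htri : ∀ n m : Fin N, ((n : ℤ) - (m : ℤ)).natAbs ≠ 1 → h n m = 0)
    (D : Matrix (Fin N) (Fin N) ℂ)
    (hD : D = Matrix.diagonal fun n : Fin N => (-1 : ℂ) ^ ((n : ℕ) + 1))
    (Y Z : Matrix (Fin 2) (Fin 2) ℂ)
    (hY : Y = !![0, -Complex.I; Complex.I, 0])
    (hZ : Z = !![1, 0; 0, -1])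
    (t : ℝ) :
    Commute (Z ⊗ₖ D)
      (NormedSpace.exp ((-2 * Complex.I * (t : ℂ)) • (Y ⊗ₖ h))) :=
  stmt0_general N h htri D hD Y Z hY hZ t
end

section
/- Let N = 2L be even and let h be an N×N complex Hermitian matrix satisfying D·h·D = −h and P·h·P = h, where D is the diagonal matrix with D_{nn} = (−1)^n and P is the reversal (exchange) matrix with P_{nm} = 1 if m = N+1−n and 0 otherwise. Suppose perfect state transfer holds: exp(−i t₀ h) = c·P for some real t₀ and some c ∈ ℂ with |c| = 1. Let D̃ be the diagonal matrix whose first L diagonal entries are −1 and whose last L diagonal entries are +1, and set R = exp(i(t₀/2)h) · D̃ · exp(−i(t₀/2)h). Then every diagonal entry of R vanishes: R_{nn} = 0 for all n = 1,…,N. -/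
/-!
Write `A = exp(-i (t₀/2) h)`, so that `R = A⁻¹ D̃ A`. Conjugation by `D` inverts `A` and fixes
`D̃`, so `D R D = A D̃ A⁻¹`. Perfect state transfer says `A² = c P`; hence conjugating by `A`
instead of `A⁻¹` costs exactly a conjugation by `P`, i.e. `A D̃ A⁻¹ = P R P`. Mirror symmetry
makes `P` commute with `A`, while `P D̃ P = -D̃` because `N = 2L`; so `P R P = -R`. Altogether
`D R D = -R`, and since `D` is a diagonal matrix of signs, `R n n = -R n n`.
-/

open Matrix

theorem mul_mul_mul_of_mul_self_eq_one {α : Type*} [Monoid α] {Q : α} (hQ : Q * Q = 1)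
    (x y : α) : Q * (x * y) * Q = Q * x * Q * (Q * y * Q) := by
  calc Q * (x * y) * Q = Q * x * (Q * Q) * y * Q := by rw [hQ, mul_one]; simp only [mul_assoc]
    _ = Q * x * Q * (Q * y * Q) := by simp only [mul_assoc]

theorem mul_mul_eq_conj_mul_mul_of_mul_self_eq_smul {𝕜 𝔸 : Type*} [Field 𝕜] [Ring 𝔸]
    [Algebra 𝕜 𝔸] {A B P : 𝔸} {c : 𝕜} (hc : c ≠ 0) (hAB : A * B = 1) (hBA : B * A = 1)
    (hP : P * P = 1) (hAA : A * A = c • P) (X : 𝔸) :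
    A * X * B = P * (B * X * A) * P := by
  have hBB : B * B = c⁻¹ • P := by
    calc B * B = B * B * (c • P * (c⁻¹ • P)) := by
          rw [smul_mul_smul_comm, mul_inv_cancel₀ hc, hP, one_smul, mul_one]
      _ = B * (B * A) * A * (c⁻¹ • P) := by rw [← hAA]; simp only [mul_assoc]
      _ = c⁻¹ • P := by rw [hBA, mul_one, hBA, one_mul]
  calc A * X * B = A * A * (B * X * A) * (B * B) := by
        simp only [mul_assoc]
        rw [← mul_assoc A B, hAB, one_mul, ← mul_assoc A B, hAB, one_mul]
    _ = P * (B * X * A) * P := by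
        rw [hAA, hBB, smul_mul_assoc, mul_smul_comm, smul_mul_assoc, smul_smul, inv_mul_cancel₀ hc,
          one_smul]

theorem conj_mul_mul_eq_neg_of_mul_self_eq_smul {𝕜 𝔸 : Type*} [Field 𝕜] [Ring 𝔸] [Algebra 𝕜 𝔸]
    {A B D P X : 𝔸} {c : 𝕜} (hc : c ≠ 0) (hAB : A * B = 1) (hBA : B * A = 1)
    (hAA : A * A = c • P) (hDD : D * D = 1) (hDA : D * A * D = B) (hDB : D * B * D = A)
    (hDX : D * X * D = X) (hPP : P * P = 1) (hPA : P * A * P = A) (hPB : P * B * P = B)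
    (hPX : P * X * P = -X) : D * (B * X * A) * D = -(B * X * A) := by
  calc D * (B * X * A) * D = A * X * B := by
        rw [mul_mul_mul_of_mul_self_eq_one hDD, mul_mul_mul_of_mul_self_eq_one hDD, hDA, hDB, hDX]
    _ = P * (B * X * A) * P := mul_mul_eq_conj_mul_mul_of_mul_self_eq_smul hc hAB hBA hPP hAA X
    _ = -(B * X * A) := by
        rw [mul_mul_mul_of_mul_self_eq_one hPP, mul_mul_mul_of_mul_self_eq_one hPP, hPA, hPB, hPX,
          mul_neg, neg_mul]

namespace Matrix

section Exp

variable {m 𝕜 : Type*} [Fintype m] [DecidableEq m] [NormedCommRing 𝕜] [NormedAlgebra ℚ 𝕜]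
  [CompleteSpace 𝕜]

theorem mul_exp_mul_of_mul_self_eq_one {Q : Matrix m m 𝕜} (hQ : Q * Q = 1)
    (M : Matrix m m 𝕜) : Q * NormedSpace.exp M * Q = NormedSpace.exp (Q * M * Q) := by
  have hinv : Q⁻¹ = Q := inv_eq_right_inv hQ
  simpa only [hinv] using (exp_conj Q M ⟨⟨Q, Q, hQ, hQ⟩, rfl⟩).symm

theorem exp_smul_mul_exp_smul (h : Matrix m m 𝕜) (a b : 𝕜) :
    NormedSpace.exp (a • h) * NormedSpace.exp (b • h) = NormedSpace.exp ((a + b) • h) := by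
  rw [add_smul, exp_add_of_commute _ _ (((Commute.refl h).smul_left a).smul_right b)]

end Exp

section Diagonal

variable {m α : Type*} [Fintype m] [DecidableEq m] [CommRing α] {d : m → α}

theorem diagonal_mul_self_eq_one (hd : ∀ i, d i * d i = 1) : diagonal d * diagonal d = 1 := by
  rw [diagonal_mul_diagonal, ← diagonal_one]
  exact congrArg diagonal (funext hd)

theorem diagonal_mul_mul_diagonal_apply_self (hd : ∀ i, d i * d i = 1) (M : Matrix m m α)
    (i : m) : (diagonal d * M * diagonal d) i i = M i i := by
  rw [mul_diagonal, diagonal_mul, mul_right_comm, hd, one_mul]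

theorem diagonal_mul_mul_diagonal_diagonal (hd : ∀ i, d i * d i = 1) (e : m → α) :
    diagonal d * diagonal e * diagonal d = diagonal e := by
  rw [(commute_diagonal d e).eq, mul_assoc, diagonal_mul_self_eq_one hd, mul_one]

end Diagonal

end Matrix

section Reversal

variable {α : Type*} {N : ℕ}

theorem Fin.revPerm_toPEquiv_toMatrix [Zero α] [One α] :
    (Fin.revPerm : Equiv.Perm (Fin N)).toPEquiv.toMatrix =
      of fun n m : Fin N => if (n : ℕ) + (m : ℕ) + 1 = N then (1 : α) else 0 := by
  ext i j
  simp only [PEquiv.toMatrix_apply, Equiv.toPEquiv_apply, Option.mem_def, Option.some.injEq,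
    Fin.revPerm_apply, of_apply, Fin.ext_iff, Fin.val_rev]
  congr 1
  exact propext (by omega)

theorem Fin.revPerm_toPEquiv_toMatrix_mul_mul [NonAssocSemiring α]
    (M : Matrix (Fin N) (Fin N) α) :
    Fin.revPerm.toPEquiv.toMatrix * M * Fin.revPerm.toPEquiv.toMatrix =
      M.submatrix Fin.revPerm Fin.revPerm := by
  rw [PEquiv.toMatrix_toPEquiv_mul, PEquiv.mul_toMatrix_toPEquiv, submatrix_submatrix]
  rfl

theorem diagonal_ite_lt_submatrix_revPerm [Ring α] {L : ℕ} (hNL : N = 2 * L) :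
    (diagonal fun n : Fin N => if (n : ℕ) < L then (-1 : α) else 1).submatrix Fin.revPerm
      Fin.revPerm = -diagonal fun n : Fin N => if (n : ℕ) < L then (-1 : α) else 1 := by
  rw [submatrix_diagonal_equiv, diagonal_neg]
  congr 1; funext n
  have hn := n.isLt
  simp only [Function.comp_apply, Fin.revPerm_apply, Fin.val_rev]
  split_ifs <;> first | omega | simp

end Reversal

theorem stmt2_general (L : ℕ) (N : ℕ) (hNL : N = 2 * L)
    (h : Matrix (Fin N) (Fin N) ℂ)
    (D P : Matrix (Fin N) (Fin N) ℂ)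
    (hD : D = Matrix.diagonal fun n : Fin N => (-1 : ℂ) ^ ((n : ℕ) + 1))
    (hP : P = Matrix.of fun n m : Fin N => if (n : ℕ) + (m : ℕ) + 1 = N then (1 : ℂ) else 0)
    (hanti : D * h * D = -h) (hmirror : P * h * P = h)
    (t₀ : ℝ) (c : ℂ) (hc : ‖c‖ = 1)
    (hpst : NormedSpace.exp ((-Complex.I * (t₀ : ℂ)) • h) = c • P)
    (Dt : Matrix (Fin N) (Fin N) ℂ)
    (hDt : Dt = Matrix.diagonal fun n : Fin N => if (n : ℕ) < L then (-1 : ℂ) else 1)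
    (R : Matrix (Fin N) (Fin N) ℂ)
    (hR : R = NormedSpace.exp ((Complex.I * ((t₀ : ℂ) / 2)) • h) * Dt *
      NormedSpace.exp ((-Complex.I * ((t₀ : ℂ) / 2)) • h)) :
    ∀ n : Fin N, R n n = 0 := by
  have hd : ∀ n : Fin N, (-1 : ℂ) ^ ((n : ℕ) + 1) * (-1) ^ ((n : ℕ) + 1) = 1 := fun n => by
    rw [← mul_pow]; norm_num
  have hDD : D * D = 1 := hD ▸ diagonal_mul_self_eq_one hd
  have hPconj : ∀ M, P * M * P = M.submatrix Fin.revPerm Fin.revPerm :=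
    (hP.trans Fin.revPerm_toPEquiv_toMatrix.symm) ▸ Fin.revPerm_toPEquiv_toMatrix_mul_mul
  have hPP : P * P = 1 := by simpa only [mul_one, submatrix_one_equiv] using hPconj 1
  have hDexp (a : ℂ) : D * NormedSpace.exp (a • h) * D = NormedSpace.exp ((-a) • h) := by
    rw [mul_exp_mul_of_mul_self_eq_one hDD, mul_smul_comm, smul_mul_assoc, hanti, smul_neg,
      neg_smul]
  have hPexp (a : ℂ) : P * NormedSpace.exp (a • h) * P = NormedSpace.exp (a • h) := by
    rw [mul_exp_mul_of_mul_self_eq_one hPP, mul_smul_comm, smul_mul_assoc, hmirror]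
  have hc0 : c ≠ 0 := norm_ne_zero_iff.mp (hc ▸ one_ne_zero)
  have hDRD : D * R * D = -R := by
    rw [hR]
    refine conj_mul_mul_eq_neg_of_mul_self_eq_smul hc0 ?_ ?_ ?_ hDD ?_ ?_ ?_ hPP (hPexp _)
      (hPexp _) ?_
    · rw [exp_smul_mul_exp_smul, neg_mul, neg_add_cancel, zero_smul, NormedSpace.exp_zero]
    · rw [exp_smul_mul_exp_smul, neg_mul, add_neg_cancel, zero_smul, NormedSpace.exp_zero]
    · rw [exp_smul_mul_exp_smul, ← hpst]; congr 2; ring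
    · rw [hDexp, neg_mul, neg_neg]
    · rw [hDexp, neg_mul]
    · rw [hD, hDt]; exact diagonal_mul_mul_diagonal_diagonal hd _
    · rw [hPconj, hDt, diagonal_ite_lt_submatrix_revPerm hNL]
  intro n
  have hRn := congrFun (congrFun hDRD n) n
  rw [hD, diagonal_mul_mul_diagonal_apply_self hd] at hRn
  exact self_eq_neg.mp hRn

/-- paper's Lemma 2, `0diagonal`. For an even-length chain (`N = 2L`)
with Hermitian single-excitation Hamiltonian `h` satisfying `D·h·D = -h` (symmetric
spectrum), `P·h·P = h` (mirror symmetry) and perfect state transfer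
`exp(-i t₀ h) = c·P` with `|c| = 1`, the matrix
`R = exp(i (t₀/2) h) · D̃ · exp(-i (t₀/2) h)` has vanishing diagonal, where `D̃` is the
diagonal matrix whose first `L` entries are `-1` and last `L` entries are `+1`. -/
theorem stmt2 (L : ℕ) (hL : 1 ≤ L) (N : ℕ) (hNL : N = 2 * L)
    (h : Matrix (Fin N) (Fin N) ℂ) (hherm : h.IsHermitian)
    (D P : Matrix (Fin N) (Fin N) ℂ)
    (hD : D = Matrix.diagonal fun n : Fin N => (-1 : ℂ) ^ ((n : ℕ) + 1))
    (hP : P = Matrix.of fun n m : Fin N => if (n : ℕ) + (m : ℕ) + 1 = N then (1 : ℂ) else 0)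
    (hanti : D * h * D = -h) (hmirror : P * h * P = h)
    (t₀ : ℝ) (c : ℂ) (hc : ‖c‖ = 1)
    (hpst : NormedSpace.exp ((-Complex.I * (t₀ : ℂ)) • h) = c • P)
    (Dt : Matrix (Fin N) (Fin N) ℂ)
    (hDt : Dt = Matrix.diagonal fun n : Fin N => if (n : ℕ) < L then (-1 : ℂ) else 1)
    (R : Matrix (Fin N) (Fin N) ℂ)
    (hR : R = NormedSpace.exp ((Complex.I * ((t₀ : ℂ) / 2)) • h) * Dt *
      NormedSpace.exp ((-Complex.I * ((t₀ : ℂ) / 2)) • h)) :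
    ∀ n : Fin N, R n n = 0 :=
  stmt2_general L N hNL h D P hD hP hanti hmirror t₀ c hc hpst Dt hDt R hR
end

section
/- Let N = 2L be even and let h be an N×N complex Hermitian matrix satisfying D·h·D = −h and P·h·P = h, where D is the diagonal matrix with D_{nn} = (−1)^n and P is the reversal (exchange) matrix with P_{nm} = 1 if m = N+1−n and 0 otherwise. Suppose exp(−i t₀ h) = c·P for some real t₀ and some c ∈ ℂ with |c| = 1. Then the entries of U = exp(−i(t₀/2)h) have mirror-symmetric moduli within each column: |U_{m,n}| = |U_{N+1−m,n}| for all m, n. -/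
open Matrix NormedSpace

/-! The mirror and chiral symmetries make `P` and `D` involutions that commute, respectively
anticommute, with `h`. Hence `U = exp(-i (t₀/2) h)` commutes with `P`, and `D U D = exp(i (t₀/2) h)`
is the inverse of `U`. Perfect state transfer says `U² = c P`, so `U⁻¹ = c̄ P U` as well. Comparing
the entries of `D U D = c̄ P U` gives `± U_{m,n} = c̄ U_{N+1-m,n}`, and taking moduli ends the proof. -/

theorem mul_smul_mul_eq_one_of_mul_self_eq_smul {R A : Type*} [CommSemiring R] [Semiring A]
    [Algebra R A] {U P : A} {c c' : R} (hUU : U * U = c • P) (hPP : P * P = 1)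
    (hPU : Commute P U) (hc : c' * c = 1) : U * (c' • (P * U)) = 1 := by
  rw [mul_smul_comm, ← mul_assoc, ← hPU.eq, mul_assoc, hUU, mul_smul_comm, smul_smul, hPP, hc,
    one_smul]

namespace Matrix

section Exp

variable {m 𝔸 : Type*} [Fintype m] [DecidableEq m] [NormedCommRing 𝔸] [NormedAlgebra ℚ 𝔸]
  [CompleteSpace 𝔸]

theorem exp_conj_of_mul_self_eq_one {Q : Matrix m m 𝔸} (hQ : Q * Q = 1) (A : Matrix m m 𝔸) :
    exp (Q * A * Q) = Q * exp A * Q := by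
  simpa only [inv_eq_right_inv hQ] using exp_conj Q A (.of_mul_eq_one Q hQ)

theorem exp_neg_mul_exp (A : Matrix m m 𝔸) : exp (-A) * exp A = 1 := by
  rw [exp_neg]
  exact nonsing_inv_mul _ ((isUnit_iff_isUnit_det _).mp (isUnit_exp A))

theorem conj_exp_eq_smul_mul_exp {D P A : Matrix m m 𝔸} {c c' : 𝔸}
    (hDD : D * D = 1) (hPP : P * P = 1) (hanti : D * A * D = -A) (hmirror : P * A * P = A)
    (hsq : exp (A + A) = c • P) (hc : c' * c = 1) :
    D * exp A * D = c' • (P * exp A) := by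
  have hleft : D * exp A * D * exp A = 1 := by
    rw [← exp_conj_of_mul_self_eq_one hDD, hanti, exp_neg_mul_exp]
  have hPU : Commute P (exp A) :=
    calc P * exp A = P * exp A * P * P := by rw [mul_assoc _ P P, hPP, mul_one]
      _ = exp A * P := by rw [← exp_conj_of_mul_self_eq_one hPP, hmirror]
  have hUU : exp A * exp A = c • P := by
    rw [← exp_add_of_commute _ _ (Commute.refl A), hsq]
  exact left_inv_eq_right_inv hleft (mul_smul_mul_eq_one_of_mul_self_eq_smul hUU hPP hPU hc)

end Exp

section Reversal

variable {R : Type*} [NonAssocSemiring R] {N : ℕ}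

/-- The exchange matrix, the paper's `P`. -/
def reversal (R : Type*) [Zero R] [One R] (N : ℕ) : Matrix (Fin N) (Fin N) R :=
  of fun i j => if (i : ℕ) + j + 1 = N then 1 else 0

theorem reversal_mul_apply {n : Type*} (M : Matrix (Fin N) n R) (i : Fin N) (j : n) :
    (reversal R N * M) i j = M i.rev j := by
  have hrev (k : Fin N) : (i : ℕ) + k + 1 = N ↔ k = i.rev := by
    rw [Fin.ext_iff, Fin.val_rev]
    omega
  simp [reversal, mul_apply, hrev]

theorem reversal_mul_self : reversal R N * reversal R N = 1 := by
  ext i j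
  rw [reversal_mul_apply, one_apply]
  simp only [reversal, of_apply, Fin.val_rev, Fin.ext_iff]
  exact if_congr (by omega) rfl rfl

end Reversal

end Matrix

theorem stmt3_general (N : ℕ)
    (h : Matrix (Fin N) (Fin N) ℂ)
    (D P : Matrix (Fin N) (Fin N) ℂ)
    (hD : D = Matrix.diagonal fun n : Fin N => (-1 : ℂ) ^ ((n : ℕ) + 1))
    (hP : P = Matrix.of fun n m : Fin N => if (n : ℕ) + (m : ℕ) + 1 = N then (1 : ℂ) else 0)
    (hanti : D * h * D = -h) (hmirror : P * h * P = h)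
    (t₀ : ℝ) (c : ℂ) (hc : ‖c‖ = 1)
    (hpst : NormedSpace.exp ((-Complex.I * (t₀ : ℂ)) • h) = c • P)
    (U : Matrix (Fin N) (Fin N) ℂ)
    (hU : U = NormedSpace.exp ((-Complex.I * ((t₀ : ℂ) / 2)) • h)) :
    ∀ m n : Fin N, ‖U m n‖ = ‖U m.rev n‖ := by
  obtain rfl : P = reversal ℂ N := hP
  set s := -Complex.I * ((t₀ : ℂ) / 2) with hs
  have hDD : D * D = 1 := by
    rw [hD, diagonal_mul_diagonal, ← diagonal_one]
    congr 1 with n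
    rw [← pow_add, ← two_mul, pow_mul, neg_one_sq, one_pow]
  have hsq : exp (s • h + s • h) = c • reversal ℂ N := by
    rw [← add_smul, ← hpst, hs]
    congr 2
    ring
  have hkey : D * U * D = star c • (reversal ℂ N * U) := by
    rw [hU]
    refine conj_exp_eq_smul_mul_exp hDD reversal_mul_self ?_ ?_ hsq ?_
    · rw [mul_smul_comm, smul_mul_assoc, hanti, smul_neg]
    · rw [mul_smul_comm, smul_mul_assoc, hmirror]
    · rw [Complex.star_def, Complex.conj_mul', hc, Complex.ofReal_one, one_pow]
  intro m n
  have hentry := congrArg norm (congrFun (congrFun hkey m) n)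
  simpa [hD, reversal_mul_apply, hc] using hentry

/-- key intermediate claim in the proof of the paper's Lemma 2.
For an even-length chain (`N = 2L`) with Hermitian single-excitation Hamiltonian `h`
satisfying `D·h·D = -h`, `P·h·P = h` and perfect state transfer `exp(-i t₀ h) = c·P`
with `|c| = 1`, the entries of `U = exp(-i (t₀/2) h)` have mirror-symmetric moduli within
each column: `|U_{m,n}| = |U_{N+1-m,n}|` for all `m, n`. -/
theorem stmt3 (L : ℕ) (hL : 1 ≤ L) (N : ℕ) (hNL : N = 2 * L)
    (h : Matrix (Fin N) (Fin N) ℂ) (hherm : h.IsHermitian)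
    (D P : Matrix (Fin N) (Fin N) ℂ)
    (hD : D = Matrix.diagonal fun n : Fin N => (-1 : ℂ) ^ ((n : ℕ) + 1))
    (hP : P = Matrix.of fun n m : Fin N => if (n : ℕ) + (m : ℕ) + 1 = N then (1 : ℂ) else 0)
    (hanti : D * h * D = -h) (hmirror : P * h * P = h)
    (t₀ : ℝ) (c : ℂ) (hc : ‖c‖ = 1)
    (hpst : NormedSpace.exp ((-Complex.I * (t₀ : ℂ)) • h) = c • P)
    (U : Matrix (Fin N) (Fin N) ℂ)
    (hU : U = NormedSpace.exp ((-Complex.I * ((t₀ : ℂ) / 2)) • h)) :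
    ∀ m n : Fin N, ‖U m n‖ = ‖U m.rev n‖ :=
  stmt3_general N h D P hD hP hanti hmirror t₀ c hc hpst U hU
end

section
/- Let M ≥ 1 and let H₁, G₂ be matrices over GF(2) with M columns. Assume: (a) every nonzero x ∈ GF(2)^M of Hamming weight at most 4 satisfies H₁·x ≠ 0 (i.e. any 4 columns of H₁ are linearly independent, distance 5); (b) every nonzero z ∈ GF(2)^M of Hamming weight at most 2 satisfies G₂·z ≠ 0 (i.e. any 2 columns of G₂ are linearly independent, distance 3). For n ∈ {1,…,M} define the fermion error vectors in GF(2)^M × GF(2)^M: c_n = (χ_{{1,…,n−1}}, e_n) and c′_n = (χ_{{1,…,n}}, e_n), where e_n is the n-th standard basis vector and χ_S the indicator vector of a set S. Let 𝓔 ⊆ GF(2)^M × GF(2)^M be the set of all sums of at most two vectors from {c_n, c′_n : 1 ≤ n ≤ M} (including the empty sum 0). Then the syndrome map (z, x) ↦ (H₁·x, G₂·z) is injective on 𝓔. -/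
/-!
Over `GF(2)`, two errors `p, q ∈ 𝓔` have the same syndrome iff `p + q` has zero syndrome, and
`p + q` is a sum of at most four Majorana errors. Its `X` part is the parity vector of the sites
involved, of weight at most four, so the distance of `H₁` forces every site to occur an even
number of times. Then the Jordan–Wigner strings cancel in pairs, leaving `Z` only on at most two
distinct sites, and the distance of `G₂` removes that part as well.
-/

open Matrix Finset

variable {ι : Type*} [DecidableEq ι]

namespace Multiset

lemma sum_map_eq_zero_of_even_count {V : Type*} [AddCommGroup V] [Module (ZMod 2) V]
    (N : Multiset ι) (f : ι → V) (h : ∀ i, Even (N.count i)) : (N.map f).sum = 0 := by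
  rw [Finset.sum_multiset_map_count]
  refine Finset.sum_eq_zero fun i _ => ?_
  obtain ⟨m, hm⟩ := h i
  rw [hm, add_nsmul, ZModModule.add_self]

lemma two_mul_card_toFinset_le_of_even_count (N : Multiset ι) (h : ∀ i, Even (N.count i)) :
    2 * #N.toFinset ≤ card N := by
  rw [← toFinset_sum_count_eq, mul_comm, ← smul_eq_mul, ← Finset.sum_const]
  refine Finset.sum_le_sum fun i hi => ?_
  obtain ⟨m, hm⟩ := h i
  have := count_pos.2 (mem_toFinset.1 hi)
  omega

lemma sum_map_single_one_apply {R : Type*} [AddCommMonoidWithOne R] (N : Multiset ι) (i : ι) :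
    (N.map fun n => (Pi.single n 1 : ι → R)).sum i = N.count i := by
  induction N using Multiset.induction_on with
  | empty => simp
  | cons n N ih => simp [Pi.single_apply, count_cons, ih, add_comm]

lemma hammingNorm_sum_map_single_le {α R : Type*} [Fintype ι] [AddCommMonoid R]
    [DecidableEq R] (S : Multiset α) (g : α → ι) (a : α → R) :
    hammingNorm (S.map fun s => (Pi.single (g s) (a s) : ι → R)).sum ≤ #(S.map g).toFinset := by
  refine Finset.card_le_card fun i hi => ?_
  contrapose! hi
  simp only [Finset.mem_filter, Finset.mem_univ, true_and, not_not, Pi.multiset_sum_apply,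
    map_map]
  refine sum_eq_zero fun x hx => ?_
  obtain ⟨s, hs, rfl⟩ := mem_map.1 hx
  have : g s ≠ i := fun h => hi (mem_toFinset.2 (mem_map.2 ⟨s, hs, h⟩))
  simp [this.symm]

end Multiset

lemma exists_multiset_card_le_two_sum_eq {α β : Type*} [AddCommMonoid β] (g : α → β) {p : β}
    (hp : p ∈ {0} ∪ Set.range g ∪ {p | ∃ a ∈ Set.range g, ∃ b ∈ Set.range g, p = a + b}) :
    ∃ S : Multiset α, Multiset.card S ≤ 2 ∧ p = (S.map g).sum := by
  rcases hp with (rfl | ⟨a, rfl⟩) | ⟨_, ⟨a, rfl⟩, _, ⟨b, rfl⟩, rfl⟩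
  · exact ⟨0, by simp, by simp⟩
  · exact ⟨{a}, by simp, by simp⟩
  · exact ⟨{a, b}, by simp, by simp⟩

/-- With `string n = χ_{<n}`, the labels `(0, n)` and `(1, n)` give `c_n` and `c′_n`. -/
def majorana (string : ι → ι → ZMod 2) (a : ZMod 2 × ι) : (ι → ZMod 2) × (ι → ZMod 2) :=
  (string a.2 + Pi.single a.2 a.1, Pi.single a.2 1)

lemma snd_sum_map_majorana (string : ι → ι → ZMod 2) (S : Multiset (ZMod 2 × ι)) :
    (S.map (majorana string)).sum.2 = ((S.map Prod.snd).map fun n => Pi.single n 1).sum := by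
  simp [Multiset.snd_sum, Multiset.map_map, Function.comp_def, majorana]

lemma fst_sum_map_majorana (string : ι → ι → ZMod 2) (S : Multiset (ZMod 2 × ι)) :
    (S.map (majorana string)).sum.1 =
      ((S.map Prod.snd).map string).sum + (S.map fun a => Pi.single a.2 a.1).sum := by
  simp [Multiset.fst_sum, Multiset.map_map, Function.comp_def, majorana, Multiset.sum_map_add]

section Syndrome

variable [Fintype ι] {m₁ m₂ : Type*} (string : ι → ι → ZMod 2) {k : ℕ}
  {H : Matrix m₁ ι (ZMod 2)} {G : Matrix m₂ ι (ZMod 2)}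

theorem sum_map_majorana_eq_zero (hH : ∀ x, x ≠ 0 → hammingNorm x ≤ 2 * k → H *ᵥ x ≠ 0)
    (hG : ∀ z, z ≠ 0 → hammingNorm z ≤ k → G *ᵥ z ≠ 0)
    {S : Multiset (ZMod 2 × ι)} (hS : Multiset.card S ≤ 2 * k)
    (hx : H *ᵥ (S.map (majorana string)).sum.2 = 0)
    (hz : G *ᵥ (S.map (majorana string)).sum.1 = 0) :
    (S.map (majorana string)).sum = 0 := by
  set N := S.map Prod.snd
  have hN : Multiset.card N ≤ 2 * k := by simpa [N] using hS
  have hx0 : (S.map (majorana string)).sum.2 = 0 := by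
    by_contra hne
    refine hH _ hne ?_ hx
    rw [snd_sum_map_majorana]
    calc _ ≤ #N.toFinset := by
          simpa [N] using Multiset.hammingNorm_sum_map_single_le S Prod.snd fun _ => (1 : ZMod 2)
      _ ≤ 2 * k := (Multiset.toFinset_card_le N).trans hN
  have heven : ∀ i, Even (N.count i) := fun i => by
    have := congrFun hx0 i
    rwa [snd_sum_map_majorana, Multiset.sum_map_single_one_apply, Pi.zero_apply,
      ZMod.natCast_eq_zero_iff_even] at this
  have hz0 : (S.map (majorana string)).sum.1 = 0 := by
    by_contra hne
    refine hG _ hne ?_ hz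
    rw [fst_sum_map_majorana, Multiset.sum_map_eq_zero_of_even_count N string heven, zero_add]
    calc _ ≤ #N.toFinset := Multiset.hammingNorm_sum_map_single_le S Prod.snd Prod.fst
      _ ≤ k := by linarith [N.two_mul_card_toFinset_le_of_even_count heven]
  exact Prod.ext hz0 hx0

theorem sum_map_majorana_eq_of_syndrome_eq
    (hH : ∀ x, x ≠ 0 → hammingNorm x ≤ 2 * k → H *ᵥ x ≠ 0)
    (hG : ∀ z, z ≠ 0 → hammingNorm z ≤ k → G *ᵥ z ≠ 0)
    {S T : Multiset (ZMod 2 × ι)} (hS : Multiset.card S ≤ k) (hT : Multiset.card T ≤ k)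
    (h : (H *ᵥ (S.map (majorana string)).sum.2, G *ᵥ (S.map (majorana string)).sum.1) =
      (H *ᵥ (T.map (majorana string)).sum.2, G *ᵥ (T.map (majorana string)).sum.1)) :
    (S.map (majorana string)).sum = (T.map (majorana string)).sum := by
  obtain ⟨hx, hz⟩ := Prod.mk.inj h
  have hsum := sum_map_majorana_eq_zero string hH hG (S := S + T) (by simp; omega)
    (by simp [mulVec_add, hx, ZModModule.add_self])
    (by simp [mulVec_add, hz, ZModModule.add_self])
  rwa [Multiset.map_add, Multiset.sum_add, ← ZModModule.sub_eq_add, sub_eq_zero] at hsum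

end Syndrome

theorem stmt14_general (M : ℕ) (r₁ r₂ : ℕ)
    (H₁ : Matrix (Fin r₁) (Fin M) (ZMod 2)) (G₂ : Matrix (Fin r₂) (Fin M) (ZMod 2))
    (hH₁ : ∀ x : Fin M → ZMod 2, x ≠ 0 →
      (Finset.univ.filter fun i => x i ≠ 0).card ≤ 4 → H₁.mulVec x ≠ 0)
    (hG₂ : ∀ z : Fin M → ZMod 2, z ≠ 0 →
      (Finset.univ.filter fun i => z i ≠ 0).card ≤ 2 → G₂.mulVec z ≠ 0)
    (c c' : Fin M → (Fin M → ZMod 2) × (Fin M → ZMod 2))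
    (hc : ∀ n : Fin M, c n =
      ((fun i : Fin M => if (i : ℕ) < (n : ℕ) then (1 : ZMod 2) else 0),
        fun i : Fin M => if i = n then (1 : ZMod 2) else 0))
    (hc' : ∀ n : Fin M, c' n =
      ((fun i : Fin M => if (i : ℕ) ≤ (n : ℕ) then (1 : ZMod 2) else 0),
        fun i : Fin M => if i = n then (1 : ZMod 2) else 0))
    (gens E : Set ((Fin M → ZMod 2) × (Fin M → ZMod 2)))
    (hgens : gens = Set.range c ∪ Set.range c')
    (hE : E = {0} ∪ gens ∪ {p | ∃ a ∈ gens, ∃ b ∈ gens, p = a + b}) :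
    ∀ p ∈ E, ∀ q ∈ E,
      (H₁.mulVec p.2, G₂.mulVec p.1) = (H₁.mulVec q.2, G₂.mulVec q.1) → p = q := by
  set string : Fin M → Fin M → ZMod 2 := fun n i => if (i : ℕ) < n then 1 else 0
  have hc_eq : ∀ n, c n = majorana string (0, n) := fun n => by
    ext i <;> simp [hc, majorana, string, Pi.single_apply]
  have hc'_eq : ∀ n, c' n = majorana string (1, n) := fun n => by
    ext i
    · simp only [hc', majorana, string, Pi.add_apply, Pi.single_apply, Fin.ext_iff]
      split_ifs <;> first | rfl | omega
    · simp [hc', majorana, Pi.single_apply]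
  have hgens_eq : gens = Set.range (majorana string) := by
    ext p
    simp only [hgens, Set.mem_union, Set.mem_range, Prod.exists, hc_eq, hc'_eq]
    constructor
    · rintro (⟨n, rfl⟩ | ⟨n, rfl⟩) <;> exact ⟨_, n, rfl⟩
    · rintro ⟨t, n, rfl⟩
      fin_cases t
      exacts [Or.inl ⟨n, rfl⟩, Or.inr ⟨n, rfl⟩]
  intro p hp q hq hpq
  rw [hE, hgens_eq] at hp hq
  obtain ⟨S, hS, rfl⟩ := exists_multiset_card_le_two_sum_eq _ hp
  obtain ⟨T, hT, rfl⟩ := exists_multiset_card_le_two_sum_eq _ hq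
  exact sum_map_majorana_eq_of_syndrome_eq string hH₁ hG₂ hS hT hpq

/-- paper's Lemma 1. Over `GF(2)`, if `H₁` has any 4 columns linearly
independent (distance 5) and `G₂` has any 2 columns linearly independent (distance 3),
then the syndrome map `(z, x) ↦ (H₁·x, G₂·z)` is injective on the set `𝓔` of sums of at
most two of the Majorana fermion error vectors
`c_n = (χ_{{1,…,n-1}}, e_n)` and `c′_n = (χ_{{1,…,n}}, e_n)`. -/
theorem stmt14 (M : ℕ) (hM : 1 ≤ M) (r₁ r₂ : ℕ)
    (H₁ : Matrix (Fin r₁) (Fin M) (ZMod 2)) (G₂ : Matrix (Fin r₂) (Fin M) (ZMod 2))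
    (hH₁ : ∀ x : Fin M → ZMod 2, x ≠ 0 →
      (Finset.univ.filter fun i => x i ≠ 0).card ≤ 4 → H₁.mulVec x ≠ 0)
    (hG₂ : ∀ z : Fin M → ZMod 2, z ≠ 0 →
      (Finset.univ.filter fun i => z i ≠ 0).card ≤ 2 → G₂.mulVec z ≠ 0)
    (c c' : Fin M → (Fin M → ZMod 2) × (Fin M → ZMod 2))
    (hc : ∀ n : Fin M, c n =
      ((fun i : Fin M => if (i : ℕ) < (n : ℕ) then (1 : ZMod 2) else 0),
        fun i : Fin M => if i = n then (1 : ZMod 2) else 0))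
    (hc' : ∀ n : Fin M, c' n =
      ((fun i : Fin M => if (i : ℕ) ≤ (n : ℕ) then (1 : ZMod 2) else 0),
        fun i : Fin M => if i = n then (1 : ZMod 2) else 0))
    (gens E : Set ((Fin M → ZMod 2) × (Fin M → ZMod 2)))
    (hgens : gens = Set.range c ∪ Set.range c')
    (hE : E = {0} ∪ gens ∪ {p | ∃ a ∈ gens, ∃ b ∈ gens, p = a + b}) :
    ∀ p ∈ E, ∀ q ∈ E,
      (H₁.mulVec p.2, G₂.mulVec p.1) = (H₁.mulVec q.2, G₂.mulVec q.1) → p = q :=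
  stmt14_general M r₁ r₂ H₁ G₂ hH₁ hG₂ c c' hc hc' gens E hgens hE
end
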